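/- ε-Completeness of the absorbing-region decomposition: let (A₁,B₁),…,(A_k,B_k) be a Streett acceptance condition of measurable subsets of S, and suppose P_μ(⋂_{i=1}^k (Fin(A_i) ∪ Inf(B_i))) > 0. Then for every ε > 0 there exist a measurable region I ⊆ S and measurable regions J₁,…,J_k with J_i ⊆ I \ A_i for each i, such that for every i = 1,…,k: (1) sup_{s ∈ J_i} P_{δ_s}(σ_{A_i} < ∞) < 1, (2) for every s ∈ I, P_{δ_s}(σ_{B_i ∪ J_i ∪ Iᶜ} < ∞) = 1, and moreover (3) P_μ(I^ω) ≥ P_μ(⋂_{i=1}^k (Fin(A_i) ∪ Inf(B_i))) − ε. -/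

import Mathlib

open MeasureTheory ProbabilityTheory Filter Set ENNReal

/-- The one-step shift on trajectories: `shift ω n = ω (n+1)`. -/
def shift {S : Type*} (ω : ℕ → S) : ℕ → S := fun n => ω (n + 1)

/-- `Fin A`: the event of visiting `A` only finitely many times. -/
def finVisits {S : Type*} (A : Set S) : Set (ℕ → S) :=
  {ω | ∃ n, ∀ m, n ≤ m → ω m ∉ A}

/-- `Inf B`: the event of visiting `B` infinitely many times. -/
def infVisits {S : Type*} (B : Set S) : Set (ℕ → S) :=
  {ω | ∀ n, ∃ m, n ≤ m ∧ ω m ∈ B}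

/-- `{σ_A < ∞}`: the event that the first return time to `A` is finite,
where `σ_A = 1 + τ_A ∘ shift`; equivalently `∃ n, ω (n+1) ∈ A`. -/
def retEvent {S : Type*} (A : Set S) : Set (ℕ → S) := {ω | ∃ n, ω (n + 1) ∈ A}

/-- `I^ω`: the event of remaining in `I` forever. -/
def invEvent {S : Type*} (I : Set S) : Set (ℕ → S) := {ω | ∀ n, ω n ∈ I}

/-- Prepend a state to a trajectory. -/
def consTraj {S : Type*} (s : S) (ω : ℕ → S) : ℕ → S
  | 0 => s
  | n + 1 => ω n

/-- `T` is the Ionescu–Tulcea trajectory kernel of the time-homogeneous Markov chain with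
transition kernel `P`: `T s` is the law on `S^ℕ` (with the product σ-algebra) of the
coordinate Markov chain with kernel `P` started at `s`.  It is uniquely characterised
(by the Ionescu–Tulcea theorem) by the one-step Markov recursion below: the trajectory
from `s` is `s` followed by a trajectory started from a `P s`-distributed state.
The trajectory measure `P_ξ` with initial distribution `ξ` is then `ξ.bind (fun s => T s)`,
and `P_{δ_s} = T s`. -/
def IsTrajKernel {S : Type*} [MeasurableSpace S] (P : Kernel S S)
    (T : Kernel S (ℕ → S)) : Prop :=
  ∀ s : S, (T s : Measure (ℕ → S)) =
    ((P s : Measure S).bind (fun u => (T u : Measure (ℕ → S)))).map (consTraj s)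

open Topology

section ARD

set_option linter.unusedSectionVars false

variable {S : Type*} [MeasurableSpace S]

/-- n-step shift. -/
def shiftN (n : ℕ) (ω : ℕ → S) : ℕ → S := fun m => ω (n + m)

/-- truncation at time n. -/
def trunc (n : ℕ) (ω : ℕ → S) : ℕ → S := fun m => ω (min m n)

lemma measurable_shiftN (n : ℕ) : Measurable (shiftN (S := S) n) :=
  measurable_pi_lambda _ fun _ => measurable_pi_apply _

lemma measurable_trunc (n : ℕ) : Measurable (trunc (S := S) n) :=
  measurable_pi_lambda _ fun _ => measurable_pi_apply _

lemma measurable_consTraj (s : S) : Measurable (consTraj s) := by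
  apply measurable_pi_lambda
  intro m
  cases m with
  | zero => exact measurable_const
  | succ j => exact measurable_pi_apply j

lemma trunc_comp_trunc {m n : ℕ} (h : m ≤ n) :
    (trunc (S := S) m) ∘ (trunc n) = trunc m := by
  funext ω j
  simp only [Function.comp_apply, trunc]
  congr 1
  omega

/-- The coordinate filtration. -/
def ardF : Filtration ℕ (inferInstance : MeasurableSpace (ℕ → S)) where
  seq n := MeasurableSpace.comap (trunc n) inferInstance
  mono' := by
    intro m n h
    show MeasurableSpace.comap (trunc m) inferInstance ≤ MeasurableSpace.comap (trunc n) inferInstance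
    have h1 : trunc (S := S) m = (trunc m) ∘ (trunc n) := (trunc_comp_trunc h).symm
    rw [h1, ← MeasurableSpace.comap_comp]
    exact MeasurableSpace.comap_mono (measurable_trunc m).comap_le
  le' n := (measurable_trunc n).comap_le

lemma comap_eval_le (n m : ℕ) (h : m ≤ n) :
    MeasurableSpace.comap (fun ω : ℕ → S => ω m) inferInstance ≤ ardF (S := S) n := by
  have h1 : (fun ω : ℕ → S => ω m) = (fun ω : ℕ → S => ω m) ∘ trunc n := by
    funext ω
    simp [trunc, Nat.min_eq_left h]
  rw [h1, ← MeasurableSpace.comap_comp]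
  exact MeasurableSpace.comap_mono (measurable_pi_apply m).comap_le

lemma measurable_eval_ardF {n m : ℕ} (h : m ≤ n) :
    Measurable[ardF (S := S) n] (fun ω : ℕ → S => ω m) := by
  rw [measurable_iff_comap_le]
  exact comap_eval_le n m h

lemma iSup_ardF : (⨆ n, ardF (S := S) n) = (inferInstance : MeasurableSpace (ℕ → S)) := by
  apply le_antisymm
  · exact iSup_le fun n => (ardF (S := S)).le n
  · show (MeasurableSpace.pi : MeasurableSpace (ℕ → S)) ≤ _
    have hpi : (MeasurableSpace.pi : MeasurableSpace (ℕ → S)) =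
        ⨆ m, MeasurableSpace.comap (fun ω : ℕ → S => ω m) inferInstance := rfl
    exact hpi.trans_le (iSup_le fun m => le_trans (comap_eval_le m m le_rfl) (le_iSup _ m))

lemma measurableSet_finVisits {A : Set S} (hA : MeasurableSet A) :
    MeasurableSet (finVisits A) := by
  have h1 : finVisits A = ⋃ n : ℕ, ⋂ m : ℕ, ⋂ _ : n ≤ m, (fun ω : ℕ → S => ω m) ⁻¹' Aᶜ := by
    ext ω
    simp [finVisits]
  rw [h1]
  exact MeasurableSet.iUnion fun n => MeasurableSet.iInter fun m => MeasurableSet.iInter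
    fun _ => (measurable_pi_apply m) hA.compl

lemma measurableSet_infVisits {B : Set S} (hB : MeasurableSet B) :
    MeasurableSet (infVisits B) := by
  have h1 : infVisits B = ⋂ n : ℕ, ⋃ m : ℕ, ⋃ _ : n ≤ m, (fun ω : ℕ → S => ω m) ⁻¹' B := by
    ext ω
    simp [infVisits]
  rw [h1]
  exact MeasurableSet.iInter fun n => MeasurableSet.iUnion fun m => MeasurableSet.iUnion
    fun _ => (measurable_pi_apply m) hB

lemma measurableSet_retEvent {A : Set S} (hA : MeasurableSet A) :
    MeasurableSet (retEvent A) := by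
  have h1 : retEvent A = ⋃ n : ℕ, (fun ω : ℕ → S => ω (n + 1)) ⁻¹' A := by
    ext ω
    simp [retEvent]
  rw [h1]
  exact MeasurableSet.iUnion fun n => (measurable_pi_apply (n + 1)) hA

lemma measurableSet_invEvent {I : Set S} (hI : MeasurableSet I) :
    MeasurableSet (invEvent I) := by
  have h1 : invEvent I = ⋂ n : ℕ, (fun ω : ℕ → S => ω n) ⁻¹' I := by
    ext ω
    simp [invEvent]
  rw [h1]
  exact MeasurableSet.iInter fun n => (measurable_pi_apply n) hI

lemma shiftN_preimage_finVisits (A : Set S) (n : ℕ) :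
    shiftN n ⁻¹' finVisits A = finVisits A := by
  ext ω
  simp only [mem_preimage, finVisits, mem_setOf_eq, shiftN]
  constructor
  · rintro ⟨c, hc⟩
    exact ⟨n + c, fun m hm => by
      have h1 : m = n + (m - n) := by omega
      rw [h1]
      exact hc (m - n) (by omega)⟩
  · rintro ⟨c, hc⟩
    exact ⟨c, fun m hm => hc (n + m) (by omega)⟩

lemma shiftN_preimage_infVisits (B : Set S) (n : ℕ) :
    shiftN n ⁻¹' infVisits B = infVisits B := by
  ext ω
  simp only [mem_preimage, infVisits, mem_setOf_eq, shiftN]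
  constructor
  · rintro h c
    obtain ⟨m, hm, hmB⟩ := h c
    exact ⟨n + m, by omega, hmB⟩
  · rintro h c
    obtain ⟨m, hm, hmB⟩ := h (n + c)
    exact ⟨m - n, by omega, by
      have h1 : n + (m - n) = m := by omega
      rw [h1]
      exact hmB⟩

lemma shiftN_consTraj (s : S) (n : ℕ) (ω : ℕ → S) :
    shiftN (n + 1) (consTraj s ω) = shiftN n ω := by
  funext m
  show consTraj s ω (n + 1 + m) = ω (n + m)
  have h1 : n + 1 + m = (n + m) + 1 := by omega
  rw [h1]
  rfl

lemma trunc_consTraj (s : S) (n : ℕ) (ω : ℕ → S) :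
    trunc (n + 1) (consTraj s ω) = consTraj s (trunc n ω) := by
  funext m
  cases m with
  | zero =>
    show consTraj s ω (min 0 (n + 1)) = s
    have h1 : min 0 (n + 1) = 0 := by omega
    rw [h1]
    rfl
  | succ j =>
    show consTraj s ω (min (j + 1) (n + 1)) = trunc n ω j
    have h1 : min (j + 1) (n + 1) = (min j n) + 1 := by omega
    rw [h1]
    rfl

lemma shiftN_zero_eq (ω : ℕ → S) : shiftN 0 ω = ω := by
  funext m
  show ω (0 + m) = ω m
  rw [Nat.zero_add]

lemma trunc_zero_consTraj (s : S) (ω : ℕ → S) :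
    trunc 0 (consTraj s ω) = (fun _ => s) := by
  funext m
  show consTraj s ω (min m 0) = s
  have h1 : min m 0 = 0 := by omega
  rw [h1]
  rfl

variable (P : Kernel S S) [IsMarkovKernel P] (T : Kernel S (ℕ → S)) [IsMarkovKernel T]

lemma lint_hT (hT : IsTrajKernel P T) (s : S) {f : (ℕ → S) → ℝ≥0∞} (hf : Measurable f) :
    ∫⁻ ω, f ω ∂(T s : Measure (ℕ → S)) =
      ∫⁻ u, ∫⁻ ω, f (consTraj s ω) ∂(T u : Measure (ℕ → S)) ∂(P s : Measure S) := by
  conv_lhs => rw [hT s]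
  rw [lintegral_map hf (measurable_consTraj s)]
  exact Measure.lintegral_bind T.measurable.aemeasurable (hf.comp (measurable_consTraj s)).aemeasurable

lemma apply_hT (hT : IsTrajKernel P T) (s : S) {E : Set (ℕ → S)} (hE : MeasurableSet E) :
    (T s : Measure (ℕ → S)) E =
      ∫⁻ u, (T u : Measure (ℕ → S)) (consTraj s ⁻¹' E) ∂(P s : Measure S) := by
  conv_lhs => rw [hT s]
  rw [Measure.map_apply (measurable_consTraj s) hE,
    Measure.bind_apply ((measurable_consTraj s) hE) T.measurable.aemeasurable]

lemma markov_traj (hT : IsTrajKernel P T) {G : Set (ℕ → S)} (hG : MeasurableSet G) :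
    ∀ (n : ℕ) (s : S) (D : Set (ℕ → S)), MeasurableSet D →
      (T s : Measure (ℕ → S)) (trunc n ⁻¹' D ∩ shiftN n ⁻¹' G) =
        ∫⁻ ω in trunc n ⁻¹' D, (T (ω n) : Measure (ℕ → S)) G ∂(T s : Measure (ℕ → S)) := by
  intro n
  induction n with
  | zero =>
    intro s D hD
    have hDm : MeasurableSet (trunc 0 ⁻¹' D) := measurable_trunc 0 hD
    have hset : MeasurableSet (trunc 0 ⁻¹' D ∩ shiftN 0 ⁻¹' G) :=
      hDm.inter (measurable_shiftN 0 hG)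
    have hfm : Measurable fun ω : ℕ → S => (T (ω 0) : Measure (ℕ → S)) G :=
      (T.measurable_coe hG).comp (measurable_pi_apply 0)
    rw [← lintegral_indicator hDm, lint_hT P T hT s (hfm.indicator hDm)]
    rw [apply_hT P T hT s hset]
    by_cases h0 : (fun _ : ℕ => s) ∈ D
    · have hpre : consTraj s ⁻¹' (trunc 0 ⁻¹' D ∩ shiftN 0 ⁻¹' G) = consTraj s ⁻¹' G := by
        ext ω'
        simp only [mem_preimage, mem_inter_iff, trunc_zero_consTraj, shiftN_zero_eq]
        exact and_iff_right h0
      have hval : ∀ ω' : ℕ → S,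
          (trunc 0 ⁻¹' D).indicator (fun ω => (T (ω 0) : Measure (ℕ → S)) G) (consTraj s ω')
            = (T s : Measure (ℕ → S)) G := by
        intro ω'
        rw [indicator_of_mem]
        · rfl
        · show trunc 0 (consTraj s ω') ∈ D
          rw [trunc_zero_consTraj]
          exact h0
      rw [hpre]
      calc ∫⁻ u, (T u : Measure (ℕ → S)) (consTraj s ⁻¹' G) ∂(P s : Measure S)
          = (T s : Measure (ℕ → S)) G := (apply_hT P T hT s hG).symm
        _ = ∫⁻ u, ∫⁻ ω', (T s : Measure (ℕ → S)) G
              ∂(T u : Measure (ℕ → S)) ∂(P s : Measure S) := by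
            simp [lintegral_const, measure_univ]
        _ = _ := by
            refine lintegral_congr fun u => lintegral_congr fun ω' => ?_
            rw [hval ω']
    · have hpre : consTraj s ⁻¹' (trunc 0 ⁻¹' D ∩ shiftN 0 ⁻¹' G) = ∅ := by
        ext ω'
        simp only [mem_preimage, mem_inter_iff, trunc_zero_consTraj, mem_empty_iff_false,
          iff_false, not_and]
        intro hmem
        exact absurd hmem h0
      have hval : ∀ ω' : ℕ → S,
          (trunc 0 ⁻¹' D).indicator (fun ω => (T (ω 0) : Measure (ℕ → S)) G) (consTraj s ω')
            = 0 := by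
        intro ω'
        rw [indicator_of_notMem]
        show ¬ trunc 0 (consTraj s ω') ∈ D
        rw [trunc_zero_consTraj]
        exact h0
      rw [hpre]
      simp only [measure_empty, lintegral_const, zero_mul]
      symm
      calc ∫⁻ u, ∫⁻ ω', (trunc 0 ⁻¹' D).indicator
            (fun ω => (T (ω 0) : Measure (ℕ → S)) G) (consTraj s ω')
              ∂(T u : Measure (ℕ → S)) ∂(P s : Measure S)
          = ∫⁻ u, ∫⁻ _, (0 : ℝ≥0∞) ∂(T u : Measure (ℕ → S)) ∂(P s : Measure S) := by
            refine lintegral_congr fun u => lintegral_congr fun ω' => hval ω'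
        _ = 0 := by simp
  | succ n ih =>
    intro s D hD
    have hDs : MeasurableSet (consTraj s ⁻¹' D) := measurable_consTraj s hD
    have hDm : MeasurableSet (trunc (n + 1) ⁻¹' D) := measurable_trunc (n + 1) hD
    have hset : MeasurableSet (trunc (n + 1) ⁻¹' D ∩ shiftN (n + 1) ⁻¹' G) :=
      hDm.inter (measurable_shiftN (n + 1) hG)
    have hfm : Measurable fun ω : ℕ → S => (T (ω (n + 1)) : Measure (ℕ → S)) G :=
      (T.measurable_coe hG).comp (measurable_pi_apply (n + 1))
    have pre1 : consTraj s ⁻¹' (trunc (n + 1) ⁻¹' D) = trunc n ⁻¹' (consTraj s ⁻¹' D) := by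
      ext ω'
      simp only [mem_preimage]
      rw [trunc_consTraj]
    have pre2 : consTraj s ⁻¹' (shiftN (n + 1) ⁻¹' G) = shiftN n ⁻¹' G := by
      ext ω'
      simp only [mem_preimage]
      rw [shiftN_consTraj]
    rw [apply_hT P T hT s hset]
    rw [← lintegral_indicator hDm, lint_hT P T hT s (hfm.indicator hDm)]
    refine lintegral_congr fun u => ?_
    have hstep : ∀ ω' : ℕ → S,
        (trunc (n + 1) ⁻¹' D).indicator
            (fun ω => (T (ω (n + 1)) : Measure (ℕ → S)) G) (consTraj s ω')
          = (trunc n ⁻¹' (consTraj s ⁻¹' D)).indicator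
            (fun ω => (T (ω n) : Measure (ℕ → S)) G) ω' := by
      intro ω'
      by_cases hmem : ω' ∈ trunc n ⁻¹' (consTraj s ⁻¹' D)
      · rw [indicator_of_mem hmem, indicator_of_mem]
        · rfl
        · rw [← pre1] at hmem
          exact hmem
      · rw [indicator_of_notMem hmem, indicator_of_notMem]
        rw [← pre1] at hmem
        exact hmem
    calc (T u : Measure (ℕ → S)) (consTraj s ⁻¹' (trunc (n + 1) ⁻¹' D ∩ shiftN (n + 1) ⁻¹' G))
        = (T u : Measure (ℕ → S)) (trunc n ⁻¹' (consTraj s ⁻¹' D) ∩ shiftN n ⁻¹' G) := by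
          rw [preimage_inter, pre1, pre2]
      _ = ∫⁻ ω in trunc n ⁻¹' (consTraj s ⁻¹' D), (T (ω n) : Measure (ℕ → S)) G
            ∂(T u : Measure (ℕ → S)) := ih u (consTraj s ⁻¹' D) hDs
      _ = ∫⁻ ω', (trunc n ⁻¹' (consTraj s ⁻¹' D)).indicator
            (fun ω => (T (ω n) : Measure (ℕ → S)) G) ω' ∂(T u : Measure (ℕ → S)) := by
          rw [lintegral_indicator (measurable_trunc n hDs)]
      _ = _ := by
          refine lintegral_congr fun ω' => ?_
          rw [hstep ω']

lemma isProb_bind (ν : Measure S) [IsProbabilityMeasure ν] :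
    IsProbabilityMeasure (ν.bind (fun s => (T s : Measure (ℕ → S)))) := by
  constructor
  rw [Measure.bind_apply MeasurableSet.univ T.measurable.aemeasurable]
  simp [measure_univ]

lemma markov_bind (hT : IsTrajKernel P T) (ν : Measure S) {G : Set (ℕ → S)}
    (hG : MeasurableSet G) (n : ℕ) {D : Set (ℕ → S)} (hD : MeasurableSet D) :
    (ν.bind (fun s => (T s : Measure (ℕ → S)))) (trunc n ⁻¹' D ∩ shiftN n ⁻¹' G) =
      ∫⁻ ω in trunc n ⁻¹' D, (T (ω n) : Measure (ℕ → S)) G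
        ∂(ν.bind (fun s => (T s : Measure (ℕ → S)))) := by
  have hDm : MeasurableSet (trunc n ⁻¹' D) := measurable_trunc n hD
  have hset : MeasurableSet (trunc n ⁻¹' D ∩ shiftN n ⁻¹' G) :=
    hDm.inter (measurable_shiftN n hG)
  have hfm : Measurable fun ω : ℕ → S => (T (ω n) : Measure (ℕ → S)) G :=
    (T.measurable_coe hG).comp (measurable_pi_apply n)
  rw [Measure.bind_apply hset T.measurable.aemeasurable, ← lintegral_indicator hDm]
  rw [Measure.lintegral_bind T.measurable.aemeasurable (hfm.indicator hDm).aemeasurable]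
  refine lintegral_congr fun s => ?_
  rw [markov_traj P T hT hG n s D hD, lintegral_indicator hDm]

lemma condexp_shift (hT : IsTrajKernel P T) (ν : Measure S) [IsProbabilityMeasure ν]
    {G : Set (ℕ → S)} (hG : MeasurableSet G) (n : ℕ) :
    (fun ω => ((T (ω n) : Measure (ℕ → S)) G).toReal)
      =ᵐ[ν.bind (fun s => (T s : Measure (ℕ → S)))]
    (ν.bind (fun s => (T s : Measure (ℕ → S))))[(shiftN n ⁻¹' G).indicator
      (fun _ => (1 : ℝ)) | ardF (S := S) n] := by
  haveI := isProb_bind T ν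
  set Pν := ν.bind (fun s => (T s : Measure (ℕ → S))) with hPν
  have hfm : Measurable fun ω : ℕ → S => (T (ω n) : Measure (ℕ → S)) G :=
    (T.measurable_coe hG).comp (measurable_pi_apply n)
  have hcand_meas : Measurable fun ω : ℕ → S => ((T (ω n) : Measure (ℕ → S)) G).toReal :=
    hfm.ennreal_toReal
  have hcand_bdd : ∀ ω : ℕ → S, ‖((T (ω n) : Measure (ℕ → S)) G).toReal‖ ≤ 1 := by
    intro ω
    rw [Real.norm_eq_abs, abs_of_nonneg ENNReal.toReal_nonneg]
    have h1 : (T (ω n) : Measure (ℕ → S)) G ≤ 1 := prob_le_one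
    have h2 := ENNReal.toReal_mono ENNReal.one_ne_top h1
    simpa using h2
  have hcand_int : Integrable (fun ω : ℕ → S => ((T (ω n) : Measure (ℕ → S)) G).toReal) Pν :=
    (integrable_const (1 : ℝ)).mono' hcand_meas.aestronglyMeasurable (ae_of_all _ hcand_bdd)
  refine ae_eq_condExp_of_forall_setIntegral_eq ((ardF (S := S)).le n)
    ((integrable_const (1 : ℝ)).indicator (measurable_shiftN n hG)) ?_ ?_ ?_
  · intro C _ _
    exact hcand_int.integrableOn
  · intro C hC _
    obtain ⟨D, hD, rfl⟩ := MeasurableSpace.measurableSet_comap.mp hC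
    have hDm : MeasurableSet (trunc n ⁻¹' D) := measurable_trunc n hD
    -- RHS: integral of indicator
    rw [setIntegral_indicator (measurable_shiftN n hG)]
    rw [setIntegral_const]
    -- LHS: via markov_bind
    have hlt : ∀ᵐ ω ∂(Pν.restrict (trunc n ⁻¹' D)),
        (T (ω n) : Measure (ℕ → S)) G < ⊤ :=
      ae_of_all _ fun ω => lt_of_le_of_lt prob_le_one (by simp)
    rw [integral_toReal (hfm.aemeasurable) hlt]
    rw [← markov_bind P T hT ν hG n hD]
    rw [smul_eq_mul, mul_one]
    rfl
  · have hout : Measurable fun u : S => ((T u : Measure (ℕ → S)) G).toReal :=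
      (T.measurable_coe hG).ennreal_toReal
    have hcomp : Measurable[ardF (S := S) n]
        fun ω : ℕ → S => ((T (ω n) : Measure (ℕ → S)) G).toReal :=
      hout.comp (measurable_eval_ardF (le_refl n))
    exact StronglyMeasurable.aestronglyMeasurable (Measurable.stronglyMeasurable hcomp)

lemma levy_ard (ν : Measure S) [IsProbabilityMeasure ν] {G : Set (ℕ → S)}
    (hG : MeasurableSet G) :
    ∀ᵐ ω ∂(ν.bind (fun s => (T s : Measure (ℕ → S)))),
      Tendsto (fun n => ((ν.bind (fun s => (T s : Measure (ℕ → S))))[G.indicator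
        (fun _ => (1 : ℝ)) | ardF (S := S) n]) ω) atTop (𝓝 (G.indicator (fun _ => (1 : ℝ)) ω)) := by
  haveI := isProb_bind T ν
  refine Integrable.tendsto_ae_condExp ((integrable_const (1 : ℝ)).indicator hG) ?_
  rw [iSup_ardF]
  exact stronglyMeasurable_const.indicator hG

lemma fact_F1 (hT : IsTrajKernel P T) (ν : Measure S) [IsProbabilityMeasure ν]
    {R : Set (ℕ → S)} (hR : MeasurableSet R) (hinv : ∀ n, shiftN n ⁻¹' R = R) :
    ∀ᵐ ω ∂(ν.bind (fun s => (T s : Measure (ℕ → S)))),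
      Tendsto (fun n => ((T (ω n) : Measure (ℕ → S)) R).toReal) atTop
        (𝓝 (R.indicator (fun _ => (1 : ℝ)) ω)) := by
  have hc : ∀ n : ℕ, (fun ω => ((T (ω n) : Measure (ℕ → S)) R).toReal)
      =ᵐ[ν.bind (fun s => (T s : Measure (ℕ → S)))]
      (ν.bind (fun s => (T s : Measure (ℕ → S))))[R.indicator
        (fun _ => (1 : ℝ)) | ardF (S := S) n] := by
    intro n
    have h1 := condexp_shift P T hT ν hR n
    rwa [hinv n] at h1
  filter_upwards [levy_ard T ν hR, ae_all_iff.mpr hc] with ω hlevy hcand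
  exact (tendsto_congr fun n => hcand n).mpr hlevy

lemma fact_F2 (hT : IsTrajKernel P T) (ν : Measure S) [IsProbabilityMeasure ν]
    {A : Set S} (hA : MeasurableSet A) :
    ∀ᵐ ω ∂(ν.bind (fun s => (T s : Measure (ℕ → S)))),
      ω ∈ finVisits A → ∀ᶠ n in atTop,
        (1 / 2 : ℝ) < ((T (ω n) : Measure (ℕ → S)) (retEvent A)ᶜ).toReal := by
  haveI := isProb_bind T ν
  set Pν := ν.bind (fun s => (T s : Measure (ℕ → S))) with hPν
  have hnoRet : MeasurableSet (retEvent A)ᶜ := (measurableSet_retEvent hA).compl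
  have hGN : ∀ N : ℕ, MeasurableSet (shiftN N ⁻¹' (retEvent A)ᶜ) :=
    fun N => measurable_shiftN N hnoRet
  -- monotonicity: for N ≤ n the condexp of 1_{G_N} is ≤ the candidate at n
  have hmono : ∀ N n : ℕ, N ≤ n →
      (Pν[(shiftN N ⁻¹' (retEvent A)ᶜ).indicator (fun _ => (1 : ℝ)) | ardF (S := S) n])
        ≤ᵐ[Pν] fun ω => ((T (ω n) : Measure (ℕ → S)) (retEvent A)ᶜ).toReal := by
    intro N n hNn
    have hsub : shiftN N ⁻¹' (retEvent A)ᶜ ⊆ shiftN n ⁻¹' (retEvent A)ᶜ := by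
      intro ω hω
      simp only [mem_preimage, mem_compl_iff, retEvent, mem_setOf_eq, shiftN] at hω ⊢
      intro hcon
      obtain ⟨m, hm⟩ := hcon
      exact hω ⟨(n - N) + m, by
        have h1 : N + ((n - N) + m + 1) = n + (m + 1) := by omega
        rw [h1]
        exact hm⟩
    have hle : (shiftN N ⁻¹' (retEvent A)ᶜ).indicator (fun _ => (1 : ℝ))
        ≤ᵐ[Pν] (shiftN n ⁻¹' (retEvent A)ᶜ).indicator (fun _ => (1 : ℝ)) := by
      refine ae_of_all _ fun ω => ?_
      exact indicator_le_indicator_of_subset hsub (fun _ => zero_le_one) ω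
    have h2 := condExp_mono (μ := Pν) (m := ardF (S := S) n)
      ((integrable_const (1 : ℝ)).indicator (hGN N))
      ((integrable_const (1 : ℝ)).indicator (hGN n)) hle
    have h3 := condexp_shift P T hT ν hnoRet n
    filter_upwards [h2, h3] with ω h2ω h3ω
    rw [← h3ω] at h2ω
    exact h2ω
  have hlevyN : ∀ N : ℕ, ∀ᵐ ω ∂Pν,
      Tendsto (fun n => (Pν[(shiftN N ⁻¹' (retEvent A)ᶜ).indicator
        (fun _ => (1 : ℝ)) | ardF (S := S) n]) ω) atTop
        (𝓝 ((shiftN N ⁻¹' (retEvent A)ᶜ).indicator (fun _ => (1 : ℝ)) ω)) :=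
    fun N => levy_ard T ν (hGN N)
  have hmono' : ∀ᵐ ω ∂Pν, ∀ N n : ℕ, N ≤ n →
      (Pν[(shiftN N ⁻¹' (retEvent A)ᶜ).indicator (fun _ => (1 : ℝ)) | ardF (S := S) n]) ω
        ≤ ((T (ω n) : Measure (ℕ → S)) (retEvent A)ᶜ).toReal := by
    rw [ae_all_iff]
    intro N
    rw [ae_all_iff]
    intro n
    by_cases hNn : N ≤ n
    · filter_upwards [hmono N n hNn] with ω hω
      intro _
      exact hω
    · exact ae_of_all _ fun ω h => absurd h hNn
  filter_upwards [ae_all_iff.mpr hlevyN, hmono'] with ω hlevy hm hfin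
  obtain ⟨N0, hN0⟩ := hfin
  have hmem : ω ∈ shiftN N0 ⁻¹' (retEvent A)ᶜ := by
    simp only [mem_preimage, mem_compl_iff, retEvent, mem_setOf_eq, shiftN]
    rintro ⟨m, hm'⟩
    exact hN0 (N0 + (m + 1)) (by omega) hm'
  have hval : (shiftN N0 ⁻¹' (retEvent A)ᶜ).indicator (fun _ => (1 : ℝ)) ω = 1 :=
    indicator_of_mem hmem _
  have hten := hlevy N0
  rw [hval] at hten
  have h12 : ∀ᶠ n in atTop,
      (1 / 2 : ℝ) < (Pν[(shiftN N0 ⁻¹' (retEvent A)ᶜ).indicator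
        (fun _ => (1 : ℝ)) | ardF (S := S) n]) ω := by
    exact hten.eventually (eventually_gt_nhds (show (1 / 2 : ℝ) < 1 by norm_num))
  filter_upwards [h12, eventually_ge_atTop N0] with n hn hNn
  exact lt_of_lt_of_le hn (hm N0 n hNn)

end ARD

/-- ε-completeness of the absorbing-region decomposition.  If the
reactivity property has positive probability, then for every `ε > 0` there exist a
measurable region `I` and measurable regions `Jᵢ ⊆ I \ Aᵢ` satisfying the two
obligations of the decomposition, with `P_μ(I^ω) ≥ P_μ(⋂ i, Fin(Aᵢ) ∪ Inf(Bᵢ)) − ε`. -/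
theorem absorbing_region_decomposition_eps_complete
    {S : Type*} [MeasurableSpace S]
    (P : Kernel S S) [IsMarkovKernel P]
    (T : Kernel S (ℕ → S)) [IsMarkovKernel T] (hT : IsTrajKernel P T)
    (μ : Measure S) [IsProbabilityMeasure μ]
    (k : ℕ) (A B : Fin k → Set S)
    (hA : ∀ i, MeasurableSet (A i)) (hB : ∀ i, MeasurableSet (B i))
    (hpos : 0 < (μ.bind (fun s => (T s : Measure (ℕ → S))))
      (⋂ i, finVisits (A i) ∪ infVisits (B i)))
    (ε : ℝ≥0∞) (hε : 0 < ε) :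
    ∃ (I : Set S) (J : Fin k → Set S),
      MeasurableSet I ∧
      (∀ i, MeasurableSet (J i)) ∧
      (∀ i, J i ⊆ I \ A i) ∧
      (∀ i, (⨆ s ∈ J i, T s (retEvent (A i))) < 1) ∧
      (∀ i, ∀ s ∈ I, T s (retEvent (B i ∪ J i ∪ Iᶜ)) = 1) ∧
      (μ.bind (fun s => (T s : Measure (ℕ → S))))
          (⋂ i, finVisits (A i) ∪ infVisits (B i)) - ε ≤
        (μ.bind (fun s => (T s : Measure (ℕ → S)))) (invEvent I) := by
  classical
  set R : Set (ℕ → S) := ⋂ i, finVisits (A i) ∪ infVisits (B i) with hRdef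
  have hRmeas : MeasurableSet R := MeasurableSet.iInter fun i =>
    (measurableSet_finVisits (hA i)).union (measurableSet_infVisits (hB i))
  have hRinv : ∀ n, shiftN n ⁻¹' R = R := by
    intro n
    rw [hRdef, preimage_iInter]
    exact iInter_congr fun i => by
      rw [preimage_union, shiftN_preimage_finVisits, shiftN_preimage_infVisits]
  set η : ℝ≥0∞ := (min ε 1) / 2 with hηdef
  have hη0 : 0 < η := ENNReal.div_pos (lt_min hε zero_lt_one).ne' (by simp)
  have hη1 : η ≤ 1 := le_trans (ENNReal.half_le_self) (min_le_right _ _)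
  have hηtop : η ≠ ⊤ := ne_top_of_le_ne_top one_ne_top hη1
  have hηε : η ≤ ε := le_trans (ENNReal.half_le_self) (min_le_left _ _)
  set I : Set S := {s | η ≤ (T s : Measure (ℕ → S)) R} with hIdef
  have hImeas : MeasurableSet I :=
    measurableSet_le measurable_const (T.measurable_coe hRmeas)
  set J : Fin k → Set S := fun i =>
    (I \ A i) ∩ {s | (T s : Measure (ℕ → S)) (retEvent (A i)) ≤ 1 / 2} with hJdef
  have hJmeas : ∀ i, MeasurableSet (J i) := fun i =>
    (hImeas.diff (hA i)).inter
      (measurableSet_le (T.measurable_coe (measurableSet_retEvent (hA i))) measurable_const)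
  have hJsub : ∀ i, J i ⊆ I \ A i := fun i => inter_subset_left
  have hJsup : ∀ i, (⨆ s ∈ J i, (T s : Measure (ℕ → S)) (retEvent (A i))) < 1 := by
    intro i
    refine lt_of_le_of_lt (iSup₂_le fun s hs => hs.2) ?_
    exact ENNReal.half_lt_self one_ne_zero one_ne_top
  -- Obligation (2)
  have hOb2 : ∀ i, ∀ s : S, (T s : Measure (ℕ → S)) (retEvent (B i ∪ J i ∪ Iᶜ)) = 1 := by
    intro i s
    have hXmeas : MeasurableSet (B i ∪ J i ∪ Iᶜ) :=
      ((hB i).union (hJmeas i)).union hImeas.compl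
    have hRet : MeasurableSet (retEvent (B i ∪ J i ∪ Iᶜ)) := measurableSet_retEvent hXmeas
    have hF1 := fact_F1 P T hT (Measure.dirac s) hRmeas hRinv
    have hF2 : ∀ i' : Fin k, ∀ᵐ ω ∂((Measure.dirac s).bind (fun u => (T u : Measure (ℕ → S)))),
        ω ∈ finVisits (A i') → ∀ᶠ n in atTop,
          (1 / 2 : ℝ) < ((T (ω n) : Measure (ℕ → S)) (retEvent (A i'))ᶜ).toReal :=
      fun i' => fact_F2 P T hT (Measure.dirac s) (hA i')
    rw [Measure.dirac_bind T.measurable] at hF1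
    have hF2' : ∀ᵐ ω ∂(T s : Measure (ℕ → S)), ∀ i' : Fin k,
        ω ∈ finVisits (A i') → ∀ᶠ n in atTop,
          (1 / 2 : ℝ) < ((T (ω n) : Measure (ℕ → S)) (retEvent (A i'))ᶜ).toReal := by
      rw [ae_all_iff]
      intro i'
      have h := hF2 i'
      rwa [Measure.dirac_bind T.measurable] at h
    have hae : ∀ᵐ ω ∂(T s : Measure (ℕ → S)), ω ∈ retEvent (B i ∪ J i ∪ Iᶜ) := by
      filter_upwards [hF1, hF2'] with ω h1 h2
      by_contra hω
      have hstay : ∀ n, ω (n + 1) ∉ B i ∪ J i ∪ Iᶜ := by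
        intro n hn
        exact hω ⟨n, hn⟩
      have hInI : ∀ n, 1 ≤ n → ω n ∈ I := by
        intro n hn
        obtain ⟨m, rfl⟩ : ∃ m, n = m + 1 := ⟨n - 1, by omega⟩
        have := hstay m
        by_contra hcon
        exact this (Or.inr hcon)
      -- Step 1 : ω ∈ R
      have hηR : (0 : ℝ) < η.toReal := ENNReal.toReal_pos hη0.ne' hηtop
      have hωR : ω ∈ R := by
        by_contra hωR
        have hL : R.indicator (fun _ => (1 : ℝ)) ω = 0 := indicator_of_notMem hωR _
        have hge : η.toReal ≤ R.indicator (fun _ => (1 : ℝ)) ω := by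
          refine ge_of_tendsto h1 ?_
          filter_upwards [eventually_ge_atTop 1] with n hn
          have hmem : ω n ∈ I := hInI n hn
          have : η ≤ (T (ω n) : Measure (ℕ → S)) R := hmem
          exact ENNReal.toReal_mono (measure_ne_top _ _) this
        rw [hL] at hge
        exact absurd hge (not_le.mpr hηR)
      -- Step 2
      have hmem := mem_iInter.mp hωR i
      cases hmem with
      | inr hinf =>
        obtain ⟨m, hm1, hmB⟩ := hinf 1
        obtain ⟨j, rfl⟩ : ∃ j, m = j + 1 := ⟨m - 1, by omega⟩
        exact hstay j (Or.inl (Or.inl hmB))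
      | inl hfin =>
        have hfin' := hfin
        obtain ⟨N, hN⟩ := hfin'
        obtain ⟨n, hn1, hn2⟩ := ((h2 i hfin).and (eventually_ge_atTop (N + 1))).exists
        have hu : ω n ∈ J i := by
          refine ⟨⟨hInI n (by omega), hN n (by omega)⟩, ?_⟩
          -- from 1/2 < (T u (retEvent Aᶜ)).toReal conclude T u (retEvent A) ≤ 1/2
          set x := (T (ω n) : Measure (ℕ → S)) (retEvent (A i))ᶜ with hxdef
          have hxne : x ≠ ⊤ := measure_ne_top _ _
          have hhalfne : ((1 : ℝ≥0∞) / 2) ≠ ⊤ := by simp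
          have hhalf : ((1 : ℝ≥0∞) / 2).toReal = 1 / 2 := by
            simp [ENNReal.toReal_div]
          have hx1 : (1 : ℝ≥0∞) / 2 ≤ x := by
            rw [← ENNReal.toReal_le_toReal hhalfne hxne, hhalf]
            exact hn1.le
          have hcompl : (T (ω n) : Measure (ℕ → S)) (retEvent (A i)) = 1 - x := by
            have h3 : retEvent (A i) = ((retEvent (A i))ᶜ)ᶜ := (compl_compl _).symm
            rw [h3, prob_compl_eq_one_sub (measurableSet_retEvent (hA i)).compl]
          show (T (ω n) : Measure (ℕ → S)) (retEvent (A i)) ≤ 1 / 2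
          rw [hcompl]
          calc (1 : ℝ≥0∞) - x ≤ 1 - 1 / 2 := tsub_le_tsub_left hx1 1
            _ = 1 / 2 := ENNReal.sub_half one_ne_top
        obtain ⟨j, rfl⟩ : ∃ j, n = j + 1 := ⟨n - 1, by omega⟩
        exact hstay j (Or.inl (Or.inr hu))
    have hcompl0 : (T s : Measure (ℕ → S)) (retEvent (B i ∪ J i ∪ Iᶜ))ᶜ = 0 :=
      measure_eq_zero_iff_ae_notMem.mpr (hae.mono fun ω h hc => hc h)
    exact (prob_compl_eq_zero_iff hRet).mp hcompl0
  -- Obligation (3)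
  have hOb3 : (μ.bind (fun s => (T s : Measure (ℕ → S)))) R - ε ≤
      (μ.bind (fun s => (T s : Measure (ℕ → S)))) (invEvent I) := by
    haveI := isProb_bind T μ
    set Pμ := μ.bind (fun s => (T s : Measure (ℕ → S))) with hPμ
    have hinvmeas : MeasurableSet (invEvent I) := measurableSet_invEvent hImeas
    set Cset : ℕ → Set (ℕ → S) := fun n =>
      {ω | (∀ m, m < n → ω m ∈ I) ∧ ω n ∉ I} with hCdef
    have hCmeas : ∀ n, MeasurableSet (Cset n) := by
      intro n
      have h1 : Cset n = (⋂ m, ⋂ _ : m < n, (fun ω : ℕ → S => ω m) ⁻¹' I) ∩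
          (fun ω : ℕ → S => ω n) ⁻¹' Iᶜ := by
        ext ω
        simp [hCdef]
      rw [h1]
      exact (MeasurableSet.iInter fun m => MeasurableSet.iInter fun _ =>
        (measurable_pi_apply m) hImeas).inter ((measurable_pi_apply n) hImeas.compl)
    have htrunc : ∀ n, trunc n ⁻¹' (Cset n) = Cset n := by
      intro n
      have haux : ∀ (ω : ℕ → S) (m : ℕ), m ≤ n → trunc n ω m = ω m := by
        intro ω m hm
        simp [trunc, Nat.min_eq_left hm]
      ext ω
      simp only [mem_preimage, hCdef, mem_setOf_eq]
      constructor
      · rintro ⟨ha, hb⟩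
        refine ⟨fun m hm => ?_, ?_⟩
        · rw [← haux ω m (by omega)]
          exact ha m hm
        · rw [← haux ω n le_rfl]
          exact hb
      · rintro ⟨ha, hb⟩
        refine ⟨fun m hm => ?_, ?_⟩
        · rw [haux ω m (by omega)]
          exact ha m hm
        · rw [haux ω n le_rfl]
          exact hb
    have hunion : (invEvent I)ᶜ = ⋃ n, Cset n := by
      ext ω
      simp only [mem_compl_iff, invEvent, mem_setOf_eq, not_forall, mem_iUnion, hCdef]
      constructor
      · rintro ⟨n0, hn0⟩
        have hex : ∃ n, ω n ∉ I := ⟨n0, hn0⟩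
        refine ⟨Nat.find hex, fun m hm => ?_, Nat.find_spec hex⟩
        by_contra hcon
        exact absurd (Nat.find_le hcon) (not_le.mpr hm)
      · rintro ⟨n, _, hn⟩
        exact ⟨n, hn⟩
    have hdisj : Pairwise (Function.onFun Disjoint Cset) := by
      intro m n hmn
      rcases lt_or_gt_of_ne hmn with h | h
      · exact Set.disjoint_left.mpr fun ω hm hn => hm.2 (hn.1 m h)
      · exact Set.disjoint_left.mpr fun ω hm hn => hn.2 (hm.1 n h)
    have hbound : ∀ n, Pμ (R ∩ Cset n) ≤ η * Pμ (Cset n) := by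
      intro n
      have h1 : R ∩ Cset n = trunc n ⁻¹' (Cset n) ∩ shiftN n ⁻¹' R := by
        rw [htrunc n, hRinv n, inter_comm]
      rw [h1, markov_bind P T hT μ hRmeas n (hCmeas n)]
      rw [htrunc n]
      calc ∫⁻ ω in Cset n, (T (ω n) : Measure (ℕ → S)) R ∂Pμ
          ≤ ∫⁻ _ in Cset n, η ∂Pμ := by
            refine setLIntegral_mono measurable_const fun ω hω => ?_
            have : ω n ∉ I := hω.2
            exact le_of_not_ge this
        _ = η * Pμ (Cset n) := setLIntegral_const _ _
    have hdiffsub : R \ invEvent I ⊆ ⋃ n, R ∩ Cset n := by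
      intro ω hω
      have h1 : ω ∈ (invEvent I)ᶜ := hω.2
      rw [hunion] at h1
      obtain ⟨n, hn⟩ := mem_iUnion.mp h1
      exact mem_iUnion.mpr ⟨n, hω.1, hn⟩
    have hdiff : Pμ (R \ invEvent I) ≤ η := by
      calc Pμ (R \ invEvent I) ≤ ∑' n, Pμ (R ∩ Cset n) :=
            le_trans (measure_mono hdiffsub) (measure_iUnion_le _)
        _ ≤ ∑' n, η * Pμ (Cset n) := ENNReal.tsum_le_tsum hbound
        _ = η * ∑' n, Pμ (Cset n) := ENNReal.tsum_mul_left
        _ = η * Pμ ((invEvent I)ᶜ) := by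
            rw [hunion, measure_iUnion hdisj hCmeas]
        _ ≤ η * 1 := mul_le_mul_right prob_le_one η
        _ = η := mul_one η
    have hsplit : Pμ R = Pμ (R ∩ invEvent I) + Pμ (R \ invEvent I) :=
      (measure_inter_add_diff R hinvmeas).symm
    have hle : Pμ R ≤ Pμ (invEvent I) + ε := by
      rw [hsplit]
      exact add_le_add (measure_mono inter_subset_right) (le_trans hdiff hηε)
    exact tsub_le_iff_right.mpr hle
  exact ⟨I, J, hImeas, hJmeas, hJsub, hJsup, fun i s _ => hOb2 i s, hOb3⟩
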